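/- Let n be a positive integer and λ, μ ∈ ℝ with δ = μ − λ satisfying δ ∉ {2/n, (n+2)/(2n), 1, (n+1)/n, (n+2)/n}. Then the linear system (2−nδ)γ₁−(γ₂+γ₃)=−1/2; (n(1−2δ)+2)γ₄−γ₅=nλγ₁; 2(n(1−δ)+1)γ₅=nλ(γ₂+γ₃); (1−δ)γ₂=λ; (2+n(1−δ))(γ₂+γ₃)=nλ+1 has a unique solution (γ₁,…,γ₅) ∈ ℝ⁵, given by γ₁ = n(λ+μ−1)/(2(nδ−2)(n(δ−1)−2)), γ₂ = λ/(1−δ), γ₃ = (1−λ−μ)/((δ−1)(n(δ−1)−2)), γ₄ = nλ(2+(4λ−1)n+(2λ²−λμ−μ²+2μ−1)n²)/(2(n(δ−1)−1)(n(2δ−1)−2)(nδ−2)(n(δ−1)−2)), γ₅ = nλ(nλ+1)/(2(n(δ−1)−1)(n(δ−1)−2)). -/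

import Mathlib

/-- The linear system (from the equivariance equation) characterizing the
coefficients `(γ₁,…,γ₅)` of the conformally equivariant quantization map on
second-order symbols. -/
def quantSystem (n : ℕ) (lam dlt : ℝ) (g1 g2 g3 g4 g5 : ℝ) : Prop :=
  (2 - (n : ℝ) * dlt) * g1 - (g2 + g3) = -(1 / 2) ∧
  ((n : ℝ) * (1 - 2 * dlt) + 2) * g4 - g5 = (n : ℝ) * lam * g1 ∧
  2 * ((n : ℝ) * (1 - dlt) + 1) * g5 = (n : ℝ) * lam * (g2 + g3) ∧
  (1 - dlt) * g2 = lam ∧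
  (2 + (n : ℝ) * (1 - dlt)) * (g2 + g3) = (n : ℝ) * lam + 1

set_option maxHeartbeats 2000000 in
/-- for non-resonant `δ`, the system has a unique solution,
given by the explicit coefficients `(γ₁,…,γ₅)`. -/
theorem quantSystem_unique_solution (n : ℕ) (hn : 1 ≤ n)
    (lam mu dlt : ℝ) (hdlt : dlt = mu - lam)
    (hres : dlt ∉ ({2 / (n : ℝ), ((n : ℝ) + 2) / (2 * (n : ℝ)), 1,
      ((n : ℝ) + 1) / (n : ℝ), ((n : ℝ) + 2) / (n : ℝ)} : Set ℝ)) :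
    ∀ g1 g2 g3 g4 g5 : ℝ,
      quantSystem n lam dlt g1 g2 g3 g4 g5 ↔
        (g1 = (n : ℝ) * (lam + mu - 1) /
            (2 * ((n : ℝ) * dlt - 2) * ((n : ℝ) * (dlt - 1) - 2)) ∧
         g2 = lam / (1 - dlt) ∧
         g3 = (1 - lam - mu) / ((dlt - 1) * ((n : ℝ) * (dlt - 1) - 2)) ∧
         g4 = (n : ℝ) * lam *
             (2 + (4 * lam - 1) * (n : ℝ)
               + (2 * lam ^ 2 - lam * mu - mu ^ 2 + 2 * mu - 1) * (n : ℝ) ^ 2) /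
           (2 * ((n : ℝ) * (dlt - 1) - 1) * ((n : ℝ) * (2 * dlt - 1) - 2)
             * ((n : ℝ) * dlt - 2) * ((n : ℝ) * (dlt - 1) - 2)) ∧
         g5 = (n : ℝ) * lam * ((n : ℝ) * lam + 1) /
           (2 * ((n : ℝ) * (dlt - 1) - 1) * ((n : ℝ) * (dlt - 1) - 2))) := by
  have hn0 : (n : ℝ) ≠ 0 := by positivity
  simp only [Set.mem_insert_iff, Set.mem_singleton_iff, not_or] at hres
  obtain ⟨r1, r2, r3, r4, r5⟩ := hres
  have d1 : (n : ℝ) * dlt - 2 ≠ 0 := by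
    intro h; apply r1; field_simp; linarith
  have d2 : (n : ℝ) * (2 * dlt - 1) - 2 ≠ 0 := by
    intro h; apply r2; field_simp; linarith
  have d3 : dlt - 1 ≠ 0 := sub_ne_zero.mpr r3
  have d4 : (n : ℝ) * (dlt - 1) - 1 ≠ 0 := by
    intro h; apply r4; field_simp; linarith
  have d5 : (n : ℝ) * (dlt - 1) - 2 ≠ 0 := by
    intro h; apply r5; field_simp; linarith
  have d3' : 1 - dlt ≠ 0 := fun h => d3 (by linarith)
  have d5' : 2 + (n : ℝ) * (1 - dlt) ≠ 0 := fun h => d5 (by linarith)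
  have d4' : (n : ℝ) * (1 - dlt) + 1 ≠ 0 := fun h => d4 (by linarith)
  have d2' : (n : ℝ) * (1 - 2 * dlt) + 2 ≠ 0 := fun h => d2 (by linarith)
  have d1' : 2 - (n : ℝ) * dlt ≠ 0 := fun h => d1 (by linarith)
  have hmu : mu = dlt + lam := by linarith [hdlt]
  subst hmu
  intro g1 g2 g3 g4 g5
  constructor
  · rintro ⟨e1, e2, e3, e4, e5⟩
    have h2 : g2 = lam / (1 - dlt) := by
      field_simp; linarith
    have hS : g2 + g3 = ((n : ℝ) * lam + 1) / (2 + (n : ℝ) * (1 - dlt)) := by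
      rw [eq_div_iff d5']; linarith
    have h3 : g3 = (1 - lam - (dlt + lam)) / ((dlt - 1) * ((n : ℝ) * (dlt - 1) - 2)) := by
      have : g3 = ((n : ℝ) * lam + 1) / (2 + (n : ℝ) * (1 - dlt)) - lam / (1 - dlt) := by
        rw [← hS, h2]; ring
      rw [this]; field_simp; ring
    have h1 : g1 = (n : ℝ) * (lam + (dlt + lam) - 1) /
        (2 * ((n : ℝ) * dlt - 2) * ((n : ℝ) * (dlt - 1) - 2)) := by
      have hg1 : g1 = (((n : ℝ) * lam + 1) / (2 + (n : ℝ) * (1 - dlt)) - 1 / 2) /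
          (2 - (n : ℝ) * dlt) := by
        rw [eq_div_iff d1', ← hS]; linarith
      rw [hg1]; field_simp; ring
    have h5 : g5 = (n : ℝ) * lam * ((n : ℝ) * lam + 1) /
        (2 * ((n : ℝ) * (dlt - 1) - 1) * ((n : ℝ) * (dlt - 1) - 2)) := by
      have hg5 : g5 = (n : ℝ) * lam * (((n : ℝ) * lam + 1) / (2 + (n : ℝ) * (1 - dlt))) /
          (2 * ((n : ℝ) * (1 - dlt) + 1)) := by
        rw [eq_div_iff (by intro h; apply d4'; linarith [mul_eq_zero.mp h] <;> nlinarith : 2 * ((n : ℝ) * (1 - dlt) + 1) ≠ 0), ← hS]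
        linarith
      rw [hg5]; field_simp
      ring
    refine ⟨h1, h2, h3, ?_, h5⟩
    have hg4 : g4 = ((n : ℝ) * lam * g1 + g5) / ((n : ℝ) * (1 - 2 * dlt) + 2) := by
      rw [eq_div_iff d2']; linarith
    rw [hg4, h1, h5]; field_simp; ring_nf
    have e : (-2 - (n:ℝ) + n*dlt*2) = -(2 + n - n*dlt*2) := by ring
    rw [e, inv_neg]; ring
  · rintro ⟨h1, h2, h3, h4, h5⟩
    subst h1 h2 h3 h4 h5
    refine ⟨?_, ?_, ?_, ?_, ?_⟩ <;> field_simp <;> ring
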